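/- Single-layer compression loss bound (Lemma on first layer): if y = A·V·W and ŷ = ((A ⊙ I)/‖A ⊙ I‖₁)·V·W, where A is a probability (row) vector, I a binary mask with ‖A ⊙ I‖₁ > 0, and M = V·W a matrix whose rows m_i satisfy ‖m_i‖₁ ≤ C, then ‖y − ŷ‖₁ ≤ 2C(1 − ∑_i I_i A_i). -/
import Mathlib


theorem single_layer_compression_loss_bound
    (n d : ℕ) (A I : Fin n → ℝ)
    (hA : ∀ i, 0 ≤ A i) (hAsum : ∑ i, A i = 1)
    (hI : ∀ i, I i = 0 ∨ I i = 1)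
    (F : ℝ) (hF : F = ∑ i, I i * A i) (hFpos : 0 < F)
    (M : Fin n → Fin d → ℝ) (C : ℝ)
    (hrow : ∀ i, ∑ j, |M i j| ≤ C) :
    ∑ j, |(∑ i, A i * M i j) - ∑ i, I i * A i / F * M i j|
      ≤ 2 * C * (1 - F) := by
  have hF1 : F ≤ 1 := by
    rw [hF, ← hAsum]
    apply Finset.sum_le_sum
    intro i _
    rcases hI i with h | h <;> simp [h, hA i]
  have hFne : F ≠ 0 := ne_of_gt hFpos
  have hnpos : 0 < n := by
    rcases Nat.eq_zero_or_pos n with h | h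
    · subst h; simp at hF; linarith
    · exact h
  have hC : 0 ≤ C := by
    have i : Fin n := ⟨0, hnpos⟩
    exact le_trans (Finset.sum_nonneg fun j _ => abs_nonneg _) (hrow i)
  have hS : ∑ i, |A i - I i * A i / F| = 2 * (1 - F) := by
    have key : ∀ i, |A i - I i * A i / F|
        = A i - I i * A i + I i * A i * (1 / F - 1) := by
      intro i
      rcases hI i with h | h
      · simp [h, abs_of_nonneg (hA i)]
      · have h1 : A i - A i / F ≤ 0 := by
          have : A i ≤ A i / F := by
            rw [le_div_iff₀ hFpos]
            nlinarith [hA i]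
          linarith
        rw [h]
        rw [show (1:ℝ) * A i / F = A i / F by ring]
        rw [abs_of_nonpos h1]
        field_simp
        ring
      
    rw [Finset.sum_congr rfl (fun i _ => key i)]
    rw [Finset.sum_add_distrib, Finset.sum_sub_distrib, ← Finset.sum_mul, hAsum, ← hF]
    field_simp
    ring
  calc ∑ j, |(∑ i, A i * M i j) - ∑ i, I i * A i / F * M i j|
      ≤ ∑ j, ∑ i, |A i - I i * A i / F| * |M i j| := by
        apply Finset.sum_le_sum
        intro j _
        have e : (∑ i, A i * M i j) - ∑ i, I i * A i / F * M i j
            = ∑ i, (A i - I i * A i / F) * M i j := by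
          rw [← Finset.sum_sub_distrib]
          apply Finset.sum_congr rfl
          intro i _
          ring
        rw [e]
        refine le_trans (Finset.abs_sum_le_sum_abs _ _) ?_
        apply le_of_eq
        apply Finset.sum_congr rfl
        intro i _
        rw [abs_mul]
    _ = ∑ i, |A i - I i * A i / F| * ∑ j, |M i j| := by
        rw [Finset.sum_comm]
        simp [Finset.mul_sum]
    _ ≤ ∑ i, |A i - I i * A i / F| * C :=
        Finset.sum_le_sum fun i _ =>
          mul_le_mul_of_nonneg_left (hrow i) (abs_nonneg _)
    _ = 2 * C * (1 - F) := by rw [← Finset.sum_mul, hS]; ring
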